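/- arXiv:2211.07042 — 6 statements merged into one kernel-verified Lean document; each statement's English description precedes it below -/
import Mathlib

section
/- Let P be a shortest path from a to b, and let w, w' be nodes on P (both distinct from a, b). Suppose w' precedes w on P (so a→w'→w→b is a shortest-path ordering). If w'→b→a is a shortest-path ordering (i.e., dist(w',b)+dist(b,a)=dist(w',a)), then w→b→a is also a shortest-path ordering. -/
theorem stmt_7 {V : Type*} (dist : V → V → ℝ)
    (htri : ∀ x y z, dist x z ≤ dist x y + dist y z)
    (hrefl : ∀ x, dist x x = 0)
    (hpos : ∀ x y, x ≠ y → 0 < dist x y)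
    (a b w w' : V)
    (hP : dist a w' + dist w' w + dist w b = dist a b)
    (hrev : dist w' b + dist b a = dist w' a) :
    dist w b + dist b a = dist w a := by
  linarith [htri a w' b, htri w' w b, htri w' w a, htri w b a]
end

section
/- Let P be a shortest path from a to b, and let w, w1 be nodes on P with w preceding w1 (so a→w→w1→b is a shortest-path ordering). If b→a→w1 is a shortest-path ordering, then b→a→w is a shortest-path ordering. -/
theorem stmt_8 {V : Type*} (dist : V → V → ℝ)
    (htri : ∀ x y z, dist x z ≤ dist x y + dist y z)
    (hrefl : ∀ x, dist x x = 0)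
    (hpos : ∀ x y, x ≠ y → 0 < dist x y)
    (a b w w1 : V)
    (hP : dist a w + dist w w1 + dist w1 b = dist a b)
    (h1 : dist b a + dist a w1 = dist b w1) :
    dist b a + dist a w = dist b w := by
  have t1 := htri a w w1
  have t2 := htri a w1 b
  have t3 := htri b w w1
  have t4 := htri b a w
  linarith
end

section
/- Let a, b, u, w, u', w' be nodes such that a→u'→u→w→w'→b is a shortest-path ordering (all consecutive distance equalities hold, nodes pairwise distinct). Suppose the path P from a to b through these nodes is non-reversing with respect to {u,w,u',w'}: none of u, w, u', w' satisfies b→x→a as a shortest-path ordering. Let Q be any shortest path containing all of {u, w, u', w', a, b} such that w precedes u on Q. Then Q traverses these nodes in the order w → w' → b → a → u' → u; in particular the shortest-path orderings w→w'→b, b→a→u', and a→u'→u all hold, together with dist(w,w')+dist(w',b)+dist(b,a)+dist(a,u')+dist(u',u) realizing the ordering w→w'→b→a→u'→u. -/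
/-- Collapse lemma: if a chain of six points realizes the distance between its
endpoints, then every sub-triple collapses (the triangle inequality is tight). -/
theorem collapse6_aux {V : Type*} (dist : V → V → ℝ)
    (htri : ∀ x y z, dist x z ≤ dist x y + dist y z)
    (r : Fin 6 → V)
    (hc : dist (r 0) (r 1) + dist (r 1) (r 2) + dist (r 2) (r 3) +
        dist (r 3) (r 4) + dist (r 4) (r 5) = dist (r 0) (r 5)) :
    ∀ x y z : Fin 6, x < y → y < z →
      dist (r x) (r y) + dist (r y) (r z) = dist (r x) (r z) := by
  have T := fun x y z => htri (r x) (r y) (r z)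
  intro x y z hxy hyz
  fin_cases x <;> fin_cases y <;> fin_cases z <;>
    simp only [Fin.isValue, Fin.mk_zero, Fin.mk_one,
      show (⟨2, by norm_num⟩ : Fin 6) = 2 from rfl,
      show (⟨3, by norm_num⟩ : Fin 6) = 3 from rfl,
      show (⟨4, by norm_num⟩ : Fin 6) = 4 from rfl,
      show (⟨5, by norm_num⟩ : Fin 6) = 5 from rfl] at hxy hyz ⊢ <;>
    first
      | omega
      | linarith [T 0 1 2, T 0 1 3, T 0 1 4, T 0 1 5, T 0 2 3, T 0 2 4, T 0 2 5,
          T 0 3 4, T 0 3 5, T 0 4 5, T 1 2 3, T 1 2 4, T 1 2 5, T 1 3 4, T 1 3 5,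
          T 1 4 5, T 2 3 4, T 2 3 5, T 2 4 5, T 3 4 5]

theorem stmt_10 {V : Type*} (dist : V → V → ℝ)
    (htri : ∀ x y z, dist x z ≤ dist x y + dist y z)
    (hrefl : ∀ x, dist x x = 0)
    (hpos : ∀ x y, x ≠ y → 0 < dist x y)
    (a b u w u' w' : V)
    (hne : ([a, u', u, w, w', b] : List V).Nodup)
    -- P : a → u' → u → w → w' → b is a shortest-path ordering
    (hP : dist a u' + dist u' u + dist u w + dist w w' + dist w' b = dist a b)
    -- P is non-reversing with respect to {u, w, u', w'}
    (hnonrev : ∀ x ∈ ({u, w, u', w'} : Set V), ¬ (dist b x + dist x a = dist b a))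
    -- Q visits the six nodes in the order q 0, q 1, ..., q 5, realized as a
    -- shortest-path ordering, with w before u
    (q : Fin 6 → V)
    (hqmem : ∀ i, q i ∈ ({a, b, u, w, u', w'} : Set V))
    (hqsurj : ∀ x ∈ ({a, b, u, w, u', w'} : Set V), ∃ i, q i = x)
    (hqinj : Function.Injective q)
    (hchain : dist (q 0) (q 1) + dist (q 1) (q 2) + dist (q 2) (q 3) +
        dist (q 3) (q 4) + dist (q 4) (q 5) = dist (q 0) (q 5))
    (i j : Fin 6) (hiw : q i = w) (hju : q j = u) (hij : i < j) :
    q = ![w, w', b, a, u', u] := by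
  -- extract pairwise distinctness
  simp only [List.nodup_cons, List.mem_cons, List.not_mem_nil, or_false, not_or,
    List.nodup_nil, and_true] at hne
  obtain ⟨⟨hau', hau, haw, haw', hab⟩, ⟨hu'u, hu'w, hu'w', hu'b⟩, ⟨huw, huw', hub⟩,
    ⟨hww', hwb⟩, hw'b, -⟩ := hne
  -- collapse lemma for P and for Q
  have Pcol := collapse6_aux dist htri ![a, u', u, w, w', b] hP
  have Qcol := collapse6_aux dist htri q hchain
  -- P sub-path equalities
  have T1 : dist a u' + dist u' u = dist a u := Pcol 0 1 2 (by decide) (by decide)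
  have T2 : dist a u + dist u w = dist a w := Pcol 0 2 3 (by decide) (by decide)
  have T3 : dist u w + dist w b = dist u b := Pcol 2 3 5 (by decide) (by decide)
  have T6 : dist a w + dist w b = dist a b := Pcol 0 3 5 (by decide) (by decide)
  have T7 : dist u' u + dist u b = dist u' b := Pcol 1 2 5 (by decide) (by decide)
  have T8 : dist w w' + dist w' b = dist w b := Pcol 3 4 5 (by decide) (by decide)
  -- helper for distinctness of positions
  have hne2 : ∀ {m n : Fin 6} {x y : V}, q m = x → q n = y → x ≠ y → m ≠ n := by
    intro m n x y h1 h2 hxy e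
    exact hxy (by rw [← h1, e, h2])
  -- positions of the four other nodes
  obtain ⟨ka, hka⟩ := hqsurj a (by simp)
  obtain ⟨kb, hkb⟩ := hqsurj b (by simp)
  obtain ⟨ku', hku'⟩ := hqsurj u' (by simp)
  obtain ⟨kw', hkw'⟩ := hqsurj w' (by simp)
  -- Step 1 : b comes before u on Q
  have S1 : kb < j := by
    rcases (hne2 hkb hju (Ne.symm hub)).lt_or_gt with h | h
    · exact h
    · exfalso
      have c := Qcol i j kb hij h
      rw [hiw, hju, hkb] at c
      linarith [hpos w u (Ne.symm huw), hpos u w huw]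
  -- Step 2 : w comes before a on Q
  have S2 : i < ka := by
    rcases (hne2 hiw hka (Ne.symm haw)).lt_or_gt with h | h
    · exact h
    · exfalso
      have c := Qcol ka i j h hij
      rw [hiw, hju, hka] at c
      linarith [hpos w u (Ne.symm huw), hpos u w huw]
  -- Step 3 : b comes before a on Q
  have S3 : kb < ka := by
    rcases (hne2 hkb hka (Ne.symm hab)).lt_or_gt with h | h
    · exact h
    · exfalso
      have c := Qcol i ka kb S2 h
      rw [hiw, hka, hkb] at c
      linarith [hpos w a (Ne.symm haw), hpos a w haw]
  -- Step 4 : a comes before u on Q  (else u lies between b and a, non-reversing)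
  have S4 : ka < j := by
    rcases (hne2 hka hju hau).lt_or_gt with h | h
    · exact h
    · exfalso
      have c := Qcol kb j ka S1 h
      rw [hkb, hju, hka] at c
      exact hnonrev u (by simp) c
  -- Step 5 : w comes before b on Q  (else w lies between b and a)
  have S5 : i < kb := by
    rcases (hne2 hiw hkb hwb).lt_or_gt with h | h
    · exact h
    · exfalso
      have c := Qcol kb i ka h S2
      rw [hkb, hiw, hka] at c
      exact hnonrev w (by simp) c
  -- Step 6 : a comes before u' on Q
  have S6 : ka < ku' := by
    rcases (hne2 hka hku' hau').lt_or_gt with h | h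
    · exact h
    · exfalso
      rcases (hne2 hku' hkb hu'b).lt_or_gt with h2 | h2
      · -- u' before b : contradiction with P-lengths
        have c1 := Qcol ku' kb ka h2 S3
        rw [hku', hkb, hka] at c1
        have c2 := Qcol ku' ka j h S4
        rw [hku', hka, hju] at c2
        linarith [hpos b a (Ne.symm hab), hpos u b hub, hpos a u hau]
      · -- u' strictly between b and a : non-reversing
        have c := Qcol kb ku' ka h2 h
        rw [hkb, hku', hka] at c
        exact hnonrev u' (by simp) c
  -- Step 7 : w' comes before b on Q
  have S7 : kw' < kb := by
    rcases (hne2 hkw' hkb hw'b).lt_or_gt with h | h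
    · exact h
    · exfalso
      rcases (hne2 hkw' hka (fun e => haw' e.symm)).lt_or_gt with h2 | h2
      · -- w' strictly between b and a : non-reversing
        have c := Qcol kb kw' ka h h2
        rw [hkb, hkw', hka] at c
        exact hnonrev w' (by simp) c
      · -- w' after a : contradiction with P-lengths
        have c1 := Qcol i kb ka S5 S3
        rw [hiw, hkb, hka] at c1
        have c2 := Qcol i ka kw' S2 h2
        rw [hiw, hka, hkw'] at c2
        linarith [hpos b a (Ne.symm hab), hpos a w' haw', hpos w' b hw'b]
  -- Step 8 : w comes before w' on Q
  have S8 : i < kw' := by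
    rcases (hne2 hiw hkw' hww').lt_or_gt with h | h
    · exact h
    · exfalso
      have c := Qcol kw' i kb h S5
      rw [hkw', hiw, hkb] at c
      linarith [hpos w' w (Ne.symm hww'), hpos w w' hww']
  -- Step 9 : u' comes before u on Q
  have S9 : ku' < j := by
    rcases (hne2 hku' hju hu'u).lt_or_gt with h | h
    · exact h
    · exfalso
      have c := Qcol ka j ku' S4 h
      rw [hka, hju, hku'] at c
      linarith [hpos u u' (Ne.symm hu'u), hpos u' u hu'u]
  -- now the positions are forced
  have hvals : i = 0 ∧ kw' = 1 ∧ kb = 2 ∧ ka = 3 ∧ ku' = 4 ∧ j = 5 := by omega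
  obtain ⟨e0, e1, e2, e3, e4, e5⟩ := hvals
  rw [e0] at hiw; rw [e1] at hkw'; rw [e2] at hkb; rw [e3] at hka
  rw [e4] at hku'; rw [e5] at hju
  funext m
  fin_cases m
  · exact hiw
  · exact hkw'
  · exact hkb
  · exact hka
  · exact hku'
  · exact hju
end

section
/- Consider the directed n-cycle (n ≥ 2) with unit-weight clockwise edges only (edge i → i+1 mod n, weight 1). Let k = n, c = ⌊3n/4⌋ + 1, and for each i ∈ {0,…,n−1} let s_i = i and t_i = i + ⌊3n/4⌋ (mod n). Then there exists a unique collection of paths P_0,…,P_{n−1} with P_i a shortest s_i-t_i path, every vertex lies on exactly ⌊3n/4⌋+1 of the paths (so every vertex is max-congestion with congestion c), and no single path P_i contains all vertices of the cycle. Hence Lemma 2.3 fails for general directed graphs with constant 3 (taking d = k − c). -/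
/-
A clockwise walk is determined by its start `s` and its number of edges `L`: it is the arc
`s, s+1, …, s+L`. Since `s + L = s + m` only forces `L ≡ m [MOD n]`, the arc with `m < n` edges is
the unique shortest `s`–`(s+m)` path. Hence vertex `v` lies on the path from `i` exactly when
`i = v - j` for some `j ≤ m`, which gives `m + 1` distinct starts, while the vertex `i + (m+1)` is
missed by the path from `i` as soon as `m + 1 < n`. With `m = 3(n/4)` and `n ≥ 8` this is the case.
-/

/-- A clockwise walk in the directed `n`-cycle (unit-weight edges `i → i+1`). -/
def cwWalk (n : ℕ) (l : List (ZMod n)) : Prop :=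
  l.Chain' (fun i j => j = i + 1)

/-- `l` is a shortest path from `s` to `t` in the directed `n`-cycle
(all edges have weight 1, so the weight of a walk is its number of edges). -/
def IsShortestCWPath (n : ℕ) (l : List (ZMod n)) (s t : ZMod n) : Prop :=
  cwWalk n l ∧ l.head? = some s ∧ l.getLast? = some t ∧
    ∀ l' : List (ZMod n), cwWalk n l' → l'.head? = some s → l'.getLast? = some t →
      l.length ≤ l'.length

def clockwiseArc (n : ℕ) (s : ZMod n) (L : ℕ) : List (ZMod n) :=
  (List.range (L + 1)).map (fun j : ℕ => s + j)

section clockwiseArc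

variable {n : ℕ} (s : ZMod n) (L : ℕ)

lemma cwWalk_clockwiseArc : cwWalk n (clockwiseArc n s L) := by
  rw [cwWalk, clockwiseArc, List.Chain', List.isChain_map, List.isChain_range_succ]
  intro j _
  push_cast
  ring

@[simp]
lemma head?_clockwiseArc : (clockwiseArc n s L).head? = some s := by
  simp [clockwiseArc, List.range_succ_eq_map]

@[simp]
lemma getLast?_clockwiseArc : (clockwiseArc n s L).getLast? = some (s + L) := by
  simp [clockwiseArc, List.getLast?_eq_getElem?]

@[simp]
lemma length_clockwiseArc : (clockwiseArc n s L).length = L + 1 := by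
  simp [clockwiseArc]

lemma mem_clockwiseArc {v : ZMod n} : v ∈ clockwiseArc n s L ↔ ∃ j < L + 1, s + j = v := by
  simp [clockwiseArc]

lemma clockwiseArc_succ :
    clockwiseArc n s (L + 1) = s :: clockwiseArc n (s + 1) L := by
  rw [clockwiseArc, clockwiseArc, List.range_succ_eq_map, List.map_cons, List.map_map]
  congr 1
  · simp
  · refine List.map_congr_left fun j _ => ?_
    simp only [Function.comp_apply]
    push_cast
    ring

end clockwiseArc

lemma cwWalk.exists_eq_clockwiseArc {n : ℕ} :
    ∀ {l : List (ZMod n)} {s : ZMod n}, cwWalk n l → l.head? = some s →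
      ∃ L, l = clockwiseArc n s L
  | [], _, _, hs => by simp at hs
  | [a], s, _, hs => ⟨0, by simp_all [clockwiseArc]⟩
  | a :: b :: l, s, hwalk, hs => by
    rw [cwWalk, List.Chain', List.isChain_cons_cons] at hwalk
    obtain ⟨rfl, htail⟩ := hwalk
    obtain rfl : a = s := by simpa using hs
    obtain ⟨L, hL⟩ := cwWalk.exists_eq_clockwiseArc (l := (a + 1) :: l) htail rfl
    exact ⟨L + 1, by rw [clockwiseArc_succ, ← hL]⟩

lemma le_of_natCast_eq_natCast {n L m : ℕ} (hm : m < n) (h : (L : ZMod n) = m) : m ≤ L := by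
  rw [ZMod.natCast_eq_natCast_iff', Nat.mod_eq_of_lt hm] at h
  exact h ▸ Nat.mod_le L n

section shortest

variable {n m : ℕ} (hm : m < n)
include hm

lemma isShortestCWPath_clockwiseArc (s : ZMod n) :
    IsShortestCWPath n (clockwiseArc n s m) s (s + m) := by
  refine ⟨cwWalk_clockwiseArc s m, by simp, by simp, fun l hwalk hs ht => ?_⟩
  obtain ⟨L, rfl⟩ := hwalk.exists_eq_clockwiseArc hs
  simp only [getLast?_clockwiseArc, Option.some_inj, add_right_inj] at ht
  simpa using le_of_natCast_eq_natCast hm ht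

lemma IsShortestCWPath.eq_clockwiseArc {s : ZMod n} {l : List (ZMod n)}
    (hl : IsShortestCWPath n l s (s + m)) : l = clockwiseArc n s m := by
  obtain ⟨hwalk, hs, ht, hmin⟩ := hl
  obtain ⟨L, rfl⟩ := hwalk.exists_eq_clockwiseArc hs
  simp only [getLast?_clockwiseArc, Option.some_inj, add_right_inj] at ht
  have hle := hmin _ (cwWalk_clockwiseArc s m) (by simp) (by simp)
  simp only [length_clockwiseArc] at hle
  rw [le_antisymm (by omega) (le_of_natCast_eq_natCast hm ht)]

lemma natCard_mem_clockwiseArc (v : ZMod n) :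
    Nat.card {s : ZMod n // v ∈ clockwiseArc n s m} = m + 1 := by
  have hset : {s : ZMod n | v ∈ clockwiseArc n s m} = (fun j : ℕ => v - j) '' Set.Iio (m + 1) := by
    ext s
    simp only [Set.mem_ofPred_eq, mem_clockwiseArc, Set.mem_image, Set.mem_Iio]
    constructor <;> rintro ⟨j, hj, rfl⟩ <;> exact ⟨j, hj, by ring⟩
  have hinj : Set.InjOn (fun j : ℕ => v - j) (Set.Iio (m + 1)) :=
    sub_right_injective.comp_injOn
      ((CharP.natCast_injOn_Iio (ZMod n) n).mono (Set.Iio_subset_Iio hm))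
  rw [← Set.coe_ofPred, Nat.card_coe_set_eq, hset, hinj.ncard_image, Set.ncard_Iio_nat]

end shortest

lemma add_succ_notMem_clockwiseArc {n m : ℕ} (hm : m + 1 < n) (s : ZMod n) :
    s + (m + 1 : ℕ) ∉ clockwiseArc n s m := by
  rw [mem_clockwiseArc]
  rintro ⟨j, hj, heq⟩
  have := CharP.natCast_injOn_Iio (ZMod n) n (Set.mem_Iio.mpr (by omega)) (Set.mem_Iio.mpr hm)
    (add_left_cancel heq)
  omega

theorem stmt_12_general (n : ℕ) (hn : 8 ≤ n) :
    -- unique collection of shortest s_i-t_i paths, with s_i = i, t_i = i + 3n/4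
    (∃! P : ZMod n → List (ZMod n),
        ∀ i : ZMod n, IsShortestCWPath n (P i) i (i + (3 * (n / 4) : ℕ))) ∧
    -- any such collection: every vertex has congestion exactly c = 3n/4 + 1,
    -- and no single path contains all vertices
    (∀ P : ZMod n → List (ZMod n),
        (∀ i : ZMod n, IsShortestCWPath n (P i) i (i + (3 * (n / 4) : ℕ))) →
        (∀ v : ZMod n, Nat.card {i : ZMod n // v ∈ P i} = 3 * (n / 4) + 1) ∧
        (∀ i : ZMod n, ∃ v : ZMod n, v ∉ P i)) := by
  have hlt : 3 * (n / 4) < n := by omega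
  have hsucc_lt : 3 * (n / 4) + 1 < n := by omega
  refine ⟨⟨fun i => clockwiseArc n i _, fun i => isShortestCWPath_clockwiseArc hlt i,
    fun Q hQ => funext fun i => (hQ i).eq_clockwiseArc hlt⟩, fun P hP => ?_⟩
  obtain rfl : P = fun i => clockwiseArc n i (3 * (n / 4)) :=
    funext fun i => (hP i).eq_clockwiseArc hlt
  exact ⟨natCard_mem_clockwiseArc hlt, fun i => ⟨_, add_succ_notMem_clockwiseArc hsucc_lt i⟩⟩

theorem stmt_12 (n : ℕ) (hn : 8 ≤ n) (h4 : 4 ∣ n) :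
    -- unique collection of shortest s_i-t_i paths, with s_i = i, t_i = i + 3n/4
    (∃! P : ZMod n → List (ZMod n),
        ∀ i : ZMod n, IsShortestCWPath n (P i) i (i + (3 * (n / 4) : ℕ))) ∧
    -- any such collection: every vertex has congestion exactly c = 3n/4 + 1,
    -- and no single path contains all vertices
    (∀ P : ZMod n → List (ZMod n),
        (∀ i : ZMod n, IsShortestCWPath n (P i) i (i + (3 * (n / 4) : ℕ))) →
        (∀ v : ZMod n, Nat.card {i : ZMod n // v ∈ P i} = 3 * (n / 4) + 1) ∧
        (∀ i : ZMod n, ∃ v : ZMod n, v ∉ P i)) :=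
  stmt_12_general n hn
end

section
/- In the undirected setting, let W be a finite set of nodes, a, b ∈ W a pair maximizing dist over W×W, and v_1,…,v_m the remaining nodes of W sorted by increasing dist(a,·). If every 4-subset of W is contained in some shortest path (i.e., for every 4 nodes of W there is a linear ordering of them realized as a shortest-path ordering), then for every ℓ, the ordering a→v_1→…→v_ℓ→b is consistent, i.e., for all i < j: dist(a,v_i)+dist(v_i,v_j)=dist(a,v_j), dist(a,v_i)+dist(v_i,b)=dist(a,b), and dist(v_i,v_j)+dist(v_j,b)=dist(v_i,b). -/
/-- Sum of consecutive distances along a list of nodes. -/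
def chainSum {V : Type*} (dist : V → V → ℝ) : List V → ℝ
  | x :: y :: t => dist x y + chainSum dist (y :: t)
  | _ => 0

/-- `l` is a shortest-path ordering: the consecutive distances sum to the
distance from the first node to the last. -/
def IsSPOrder {V : Type*} (dist : V → V → ℝ) (l : List V) : Prop :=
  ∀ x y : V, l.head? = some x → l.getLast? = some y → chainSum dist l = dist x y

set_option maxHeartbeats 1000000 in
lemma quad {V : Type*} [DecidableEq V] (dist : V → V → ℝ)
    (hsymm : ∀ x y, dist x y = dist y x)
    (htri : ∀ x y z, dist x z ≤ dist x y + dist y z)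
    (hpos : ∀ x y, x ≠ y → 0 < dist x y)
    (a b u v : V) (hab : a ≠ b) (hau : a ≠ u) (hav : a ≠ v)
    (hbu : b ≠ u) (hbv : b ≠ v) (huv : u ≠ v)
    (m1 : dist a u ≤ dist a b) (m2 : dist a v ≤ dist a b)
    (m3 : dist u b ≤ dist a b) (m4 : dist v b ≤ dist a b)
    (m5 : dist u v ≤ dist a b)
    (hle : dist a u ≤ dist a v)
    (l : List V) (hnd : l.Nodup)
    (hml : ∀ x, x ∈ l ↔ x ∈ ({a, b, u, v} : Finset V))
    (hsp : IsSPOrder dist l) :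
    dist a u + dist u v = dist a v ∧
    dist a u + dist u b = dist a b ∧
    dist u v + dist v b = dist u b := by
  have hlen : l.length = 4 := by
    have h1 : l.toFinset = ({a, b, u, v} : Finset V) := by
      ext x; simp [List.mem_toFinset, hml]
    have h2 : l.toFinset.card = 4 := by
      rw [h1]
      rw [Finset.card_insert_of_notMem (by simp [hab, hau, hav]),
        Finset.card_insert_of_notMem (by simp [hbu, hbv]),
        Finset.card_insert_of_notMem (by simp [huv]), Finset.card_singleton]
    rw [← h2, List.toFinset_card_of_nodup hnd]
  match l, hlen with
  | [p, q, r, s], _ =>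
    have E : dist p q + dist q r + dist r s = dist p s := by
      have := hsp p s (by simp) (by simp [List.getLast?])
      simp [chainSum] at this
      linarith
    have hpa : a = p ∨ a = q ∨ a = r ∨ a = s := by
      have := (hml a).mpr (by simp); simpa using this
    have hpb : b = p ∨ b = q ∨ b = r ∨ b = s := by
      have := (hml b).mpr (by simp); simpa using this
    have hpu : u = p ∨ u = q ∨ u = r ∨ u = s := by
      have := (hml u).mpr (by simp); simpa using this
    have hpv : v = p ∨ v = q ∨ v = r ∨ v = s := by
      have := (hml v).mpr (by simp); simpa using this
    have hnd' : (p ≠ q ∧ p ≠ r ∧ p ≠ s) ∧ (q ≠ r ∧ q ≠ s) ∧ r ≠ s := by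
      simpa [List.nodup_cons] using hnd
    obtain ⟨⟨n1, n2, n3⟩, ⟨n4, n5⟩, n6⟩ := hnd'
    rcases hpa with rfl | rfl | rfl | rfl <;>
      rcases hpb with rfl | rfl | rfl | rfl <;>
      rcases hpu with rfl | rfl | rfl | rfl <;>
      rcases hpv with rfl | rfl | rfl | rfl <;>
    first
      | exact absurd rfl (by assumption)
      | (exfalso;
         linarith [E, hle, hsymm a u, hsymm a v, hsymm a b, hsymm u v,
           hsymm u b, hsymm v b, hpos a b hab, hpos a u hau, hpos a v hav,
           hpos b u hbu, hpos b v hbv, hpos u v huv,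
           htri a u b, htri a v b, htri a u v, htri u v b, htri a b u,
           htri a b v, htri u a v, htri u b v, htri a v u, htri u a b,
           htri v a b])
      | (refine ⟨?_, ?_, ?_⟩ <;>
         linarith [E, hle, hsymm a u, hsymm a v, hsymm a b, hsymm u v,
           hsymm u b, hsymm v b, hpos a b hab, hpos a u hau, hpos a v hav,
           hpos b u hbu, hpos b v hbv, hpos u v huv,
           htri a u b, htri a v b, htri a u v, htri u v b, htri a b u,
           htri a b v, htri u a v, htri u b v, htri a v u, htri u a b,
           htri v a b])

theorem stmt_14 {V : Type*} [DecidableEq V] (dist : V → V → ℝ)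
    (hsymm : ∀ x y, dist x y = dist y x)
    (htri : ∀ x y z, dist x z ≤ dist x y + dist y z)
    (hrefl : ∀ x, dist x x = 0)
    (hpos : ∀ x y, x ≠ y → 0 < dist x y)
    (W : Finset V) (a b : V) (ha : a ∈ W) (hb : b ∈ W) (hab : a ≠ b)
    (hmax : ∀ x ∈ W, ∀ y ∈ W, dist x y ≤ dist a b)
    -- every subset of W of size at most 4 admits a shortest-path ordering
    (h4 : ∀ S : Finset V, S ⊆ W → S.card ≤ 4 →
      ∃ l : List V, l.Nodup ∧ (∀ x, x ∈ l ↔ x ∈ S) ∧ IsSPOrder dist l)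
    -- vs enumerates W \ {a, b} sorted by increasing distance from a
    (vs : List V) (hnd : vs.Nodup)
    (hmem : ∀ x, x ∈ vs ↔ x ∈ W \ {a, b})
    (hsorted : vs.Pairwise (fun x y => dist a x ≤ dist a y)) :
    ∀ i j : Fin vs.length, i < j →
      dist a (vs.get i) + dist (vs.get i) (vs.get j) = dist a (vs.get j) ∧
      dist a (vs.get i) + dist (vs.get i) b = dist a b ∧
      dist (vs.get i) (vs.get j) + dist (vs.get j) b = dist (vs.get i) b := by
  intro i j hij
  set u := vs.get i with hu_def
  set v := vs.get j with hv_def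
  have hu : u ∈ W \ {a, b} := (hmem u).mp (vs.get_mem i)
  have hv : v ∈ W \ {a, b} := (hmem v).mp (vs.get_mem j)
  simp only [Finset.mem_sdiff, Finset.mem_insert, Finset.mem_singleton,
    not_or] at hu hv
  obtain ⟨huW, hua, hub⟩ := hu
  obtain ⟨hvW, hva, hvb⟩ := hv
  have huv : u ≠ v := fun h => hij.ne ((List.Nodup.get_inj_iff hnd).mp h)
  have hle : dist a u ≤ dist a v := hsorted.rel_get_of_lt hij
  have hcard : ({a, b, u, v} : Finset V).card ≤ 4 := by
    apply le_trans (Finset.card_insert_le _ _)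
    apply Nat.succ_le_succ
    apply le_trans (Finset.card_insert_le _ _)
    apply Nat.succ_le_succ
    apply le_trans (Finset.card_insert_le _ _)
    simp
  have hsub : ({a, b, u, v} : Finset V) ⊆ W := by
    intro x hx
    simp only [Finset.mem_insert, Finset.mem_singleton] at hx
    rcases hx with rfl | rfl | rfl | rfl <;> assumption
  obtain ⟨l, hlnd, hml, hsp⟩ := h4 _ hsub hcard
  exact quad dist hsymm htri hpos a b u v hab (Ne.symm hua) (Ne.symm hva) (Ne.symm hub)
    (Ne.symm hvb) huv (hmax a ha u huW) (hmax a ha v hvW) (hmax u huW b hb)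
    (hmax v hvW b hb) (hmax u huW v hvW) hle l hlnd hml hsp
end

section
/- Undirected cycle counterexample for constant 3: in the 4-cycle with unit edge weights (vertices 0,1,2,3, edges {0,1},{1,2},{2,3},{3,0}), every 3-subset of vertices lies on a common shortest path, but no shortest path contains all 4 vertices. Hence the constant 4 in Theorem 1.2 cannot be replaced by 3. -/
/-- A walk in the undirected 4-cycle with unit weights: consecutive vertices
differ by ±1 in `ZMod 4`. -/
def c4Walk (l : List (ZMod 4)) : Prop :=
  l.Chain' (fun i j => j = i + 1 ∨ i = j + 1)

/-- `l` is a shortest path from `s` to `t` in the unit-weight 4-cycle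
(the weight of a walk is its number of edges). -/
def IsShortestC4Path (l : List (ZMod 4)) (s t : ZMod 4) : Prop :=
  c4Walk l ∧ l.head? = some s ∧ l.getLast? = some t ∧
    ∀ l' : List (ZMod 4), c4Walk l' → l'.head? = some s → l'.getLast? = some t →
      l.length ≤ l'.length

/-! Opposite vertices `s`, `s + 2` of the 4-cycle are not adjacent, so a walk between them has at
least 3 vertices, while any two vertices are joined by a walk with at most 3 vertices. Hence the
path `m + 1, m + 2, m + 3` around a vertex `m` is a shortest path through the three other vertices,
and no shortest path can visit all 4 vertices. -/

lemma Fintype.card_le_length_of_forall_mem {α : Type*} [Fintype α] {l : List α}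
    (h : ∀ a, a ∈ l) : Fintype.card α ≤ l.length := by
  classical
  calc Fintype.card α = (Finset.univ : Finset α).card := Finset.card_univ.symm
    _ ≤ l.toFinset.card := Finset.card_le_card fun a _ => List.mem_toFinset.2 (h a)
    _ ≤ l.length := l.toFinset_card_le

@[simp]
lemma c4Walk_singleton (a : ZMod 4) : c4Walk [a] :=
  List.isChain_singleton a

@[simp]
lemma c4Walk_cons_cons {a b : ZMod 4} {l : List (ZMod 4)} :
    c4Walk (a :: b :: l) ↔ (b = a + 1 ∨ a = b + 1) ∧ c4Walk (b :: l) :=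
  List.isChain_cons_cons

lemma not_c4Walk_pair_add_two (s : ZMod 4) : ¬ c4Walk [s, s + 2] := by
  simp only [c4Walk_cons_cons, c4Walk_singleton, and_true]
  decide +revert

lemma three_le_length_of_c4Walk_add_two {s : ZMod 4} {l : List (ZMod 4)} (hl : c4Walk l)
    (hs : l.head? = some s) (ht : l.getLast? = some (s + 2)) : 3 ≤ l.length := by
  rcases l with _ | ⟨a, _ | ⟨b, _ | ⟨c, l⟩⟩⟩
  · simp at hs
  · simp only [List.head?_cons, List.getLast?_singleton, Option.some.injEq] at hs ht
    subst hs
    simp only [left_eq_add] at ht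
    exact absurd ht (by decide)
  · simp only [List.head?_cons, List.getLast?_cons_cons, List.getLast?_singleton,
      Option.some.injEq] at hs ht
    subst hs ht
    exact absurd hl (not_c4Walk_pair_add_two a)
  · simp

lemma exists_c4Walk_length_le_three (s t : ZMod 4) :
    ∃ l, c4Walk l ∧ l.head? = some s ∧ l.getLast? = some t ∧ l.length ≤ 3 := by
  obtain ⟨d, rfl⟩ : ∃ d, t = s + d := ⟨t - s, by ring⟩
  obtain rfl | rfl | rfl | rfl : d = 0 ∨ d = 1 ∨ d = 2 ∨ d = 3 := by decide +revert
  · exact ⟨[s], by simp⟩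
  · exact ⟨[s, s + 1], by simp⟩
  · refine ⟨[s, s + 1, s + 2], ?_, rfl, rfl, le_rfl⟩
    simp only [c4Walk_cons_cons, c4Walk_singleton, and_true]
    decide +revert
  · refine ⟨[s, s + 3], ?_, rfl, rfl, by simp⟩
    simp only [c4Walk_cons_cons, c4Walk_singleton, and_true]
    decide +revert

lemma IsShortestC4Path.length_le_three {l : List (ZMod 4)} {s t : ZMod 4}
    (h : IsShortestC4Path l s t) : l.length ≤ 3 := by
  obtain ⟨l', hl', hs, ht, hlen⟩ := exists_c4Walk_length_le_three s t
  exact (h.2.2.2 l' hl' hs ht).trans hlen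

lemma isShortestC4Path_avoiding (m : ZMod 4) :
    IsShortestC4Path [m + 1, m + 2, m + 3] (m + 1) (m + 3) := by
  refine ⟨?_, rfl, rfl, fun l hl hs ht => three_le_length_of_c4Walk_add_two hl hs ?_⟩
  · simp only [c4Walk_cons_cons, c4Walk_singleton, and_true]
    decide +revert
  · rw [ht]
    ring_nf

lemma mem_avoiding_of_ne {v m : ZMod 4} (hv : v ≠ m) : v ∈ [m + 1, m + 2, m + 3] := by
  decide +revert

theorem stmt_18 :
    (∀ S : Finset (ZMod 4), S.card = 3 →
      ∃ (s t : ZMod 4) (l : List (ZMod 4)), IsShortestC4Path l s t ∧ ∀ v ∈ S, v ∈ l) ∧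
    ¬ ∃ (s t : ZMod 4) (l : List (ZMod 4)), IsShortestC4Path l s t ∧ ∀ v : ZMod 4, v ∈ l := by
  constructor
  · intro S hS
    obtain ⟨m, hm⟩ : Sᶜ.Nonempty := by
      rw [← Finset.card_pos, Finset.card_compl, hS]
      simp
    refine ⟨m + 1, m + 3, _, isShortestC4Path_avoiding m, fun v hv => mem_avoiding_of_ne ?_⟩
    rintro rfl
    exact Finset.mem_compl.1 hm hv
  · rintro ⟨s, t, l, hl, hall⟩
    have hcover : 4 ≤ l.length := by
      simpa only [ZMod.card] using Fintype.card_le_length_of_forall_mem hall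
    have hshort := hl.length_le_three
    omega
end
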